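/- Let (2P_1+P_3)^b be the labelled bipartite graph consisting of two isolated black vertices together with a path on three vertices whose two endpoints are black and whose middle vertex is white. Let G be a bipartite graph with a bipartition (B, W) into independent sets such that (2P_1+P_3)^b is not a labelled induced subgraph of (B, W, E_G). Then every vertex w ∈ W is adjacent to all but at most one vertex of B, or is adjacent to at most one vertex of B. -/

import Mathlib

open SimpleGraph

/-- `B` is the black colour class of a black-and-white labelling of `H`:
every edge of `H` joins a vertex of `B` to a vertex outside `B`
(equivalently, `B` and its complement `Bᶜ` are both independent sets,
i.e. `(B, Bᶜ)` is a bipartition of `H` into two possibly empty independent sets). -/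
def IsBWLabelling {V : Type*} (H : SimpleGraph V) (B : Set V) : Prop :=
  ∀ ⦃u v : V⦄, H.Adj u v → (u ∈ B ↔ v ∉ B)

/-- `H` with black class `BH` is a labelled induced subgraph of `G` with black class `BG`:
there is an injective map preserving both adjacency and non-adjacency which maps
black vertices to black vertices and white vertices to white vertices. -/
def LabelledIndSubgraph {VH VG : Type*} (H : SimpleGraph VH) (BH : Set VH)
    (G : SimpleGraph VG) (BG : Set VG) : Prop :=
  ∃ f : VH → VG, Function.Injective f ∧
    (∀ u v : VH, H.Adj u v ↔ G.Adj (f u) (f v)) ∧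
    (∀ u : VH, u ∈ BH ↔ f u ∈ BG)

/-- `G` is strongly `H^ℓ`-free, where `BH` is the black class of the labelling `ℓ`:
there is no bipartition `(BG, BGᶜ)` of `G` such that `H^ℓ` is a labelled induced
subgraph of `(BG, BGᶜ, E_G)`. -/
def StronglyFree {VG VH : Type*} (G : SimpleGraph VG) (H : SimpleGraph VH)
    (BH : Set VH) : Prop :=
  ¬ ∃ BG : Set VG, IsBWLabelling G BG ∧ LabelledIndSubgraph H BH G BG

/-- `G` is weakly `H^ℓ`-free, where `BH` is the black class of the labelling `ℓ`:
it is not the case that `H^ℓ` is a labelled induced subgraph of `(BG, BGᶜ, E_G)`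
for every bipartition `(BG, BGᶜ)` of `G`. -/
def WeaklyFree {VG VH : Type*} (G : SimpleGraph VG) (H : SimpleGraph VH)
    (BH : Set VH) : Prop :=
  ¬ ∀ BG : Set VG, IsBWLabelling G BG → LabelledIndSubgraph H BH G BG

/-- `G` is `H`-free: `G` contains no induced subgraph isomorphic to `H`. -/
def HFree {VG VH : Type*} (G : SimpleGraph VG) (H : SimpleGraph VH) : Prop :=
  ¬ ∃ f : VH → VG, Function.Injective f ∧ ∀ u v : VH, H.Adj u v ↔ G.Adj (f u) (f v)

/-- The graph `2P_1 + P_3`: two isolated vertices `0, 1` and the path `2-3-4`.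
In the labelling `(2P_1+P_3)^b` the vertices `0, 1, 2, 4` are black and the
middle vertex `3` of the path is white. -/
def g2P1'P3 : SimpleGraph (Fin 5) := SimpleGraph.fromEdgeSet {s(2, 3), s(3, 4)}

theorem IsBWLabelling.not_adj_of_mem {V : Type*} {G : SimpleGraph V} {B : Set V}
    (hB : IsBWLabelling G B) {u v : V} (hu : u ∈ B) (hv : v ∈ B) : ¬ G.Adj u v :=
  fun huv => (hB huv).mp hu hv

theorem g2P1'P3_adj_iff (u v : Fin 5) :
    g2P1'P3.Adj u v ↔ (u = 2 ∧ v = 3) ∨ (u = 3 ∧ v = 2) ∨ (u = 3 ∧ v = 4) ∨ (u = 4 ∧ v = 3) := by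
  fin_cases u <;> fin_cases v <;> simp [g2P1'P3]

theorem labelledIndSubgraph_g2P1'P3 {V : Type*} {G : SimpleGraph V} {B : Set V}
    (hB : IsBWLabelling G B) {w b₀ b₁ b₂ b₄ : V} (hw : w ∉ B)
    (hb₀ : b₀ ∈ B) (hb₁ : b₁ ∈ B) (hb₂ : b₂ ∈ B) (hb₄ : b₄ ∈ B)
    (hwb₀ : ¬ G.Adj w b₀) (hwb₁ : ¬ G.Adj w b₁) (hwb₂ : G.Adj w b₂) (hwb₄ : G.Adj w b₄)
    (hb₀₁ : b₀ ≠ b₁) (hb₂₄ : b₂ ≠ b₄) :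
    LabelledIndSubgraph g2P1'P3 ({0, 1, 2, 4} : Set (Fin 5)) G B := by
  have hBB : ∀ x ∈ B, ∀ y ∈ B, ¬ G.Adj x y := fun x hx y hy => hB.not_adj_of_mem hx hy
  have hne : ∀ x ∈ B, w ≠ x := fun x hx h => hw (h ▸ hx)
  have hb₀₂ : b₀ ≠ b₂ := fun h => hwb₀ (h ▸ hwb₂)
  have hb₀₄ : b₀ ≠ b₄ := fun h => hwb₀ (h ▸ hwb₄)
  have hb₁₂ : b₁ ≠ b₂ := fun h => hwb₁ (h ▸ hwb₂)
  have hb₁₄ : b₁ ≠ b₄ := fun h => hwb₁ (h ▸ hwb₄)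
  refine ⟨![b₀, b₁, b₂, w, b₄], ?_, ?_, ?_⟩
  · intro i j hij
    fin_cases i <;> fin_cases j <;> simp_all
  · intro u v
    fin_cases u <;> fin_cases v <;> simp_all [g2P1'P3_adj_iff, G.adj_comm w]
  · intro u
    fin_cases u <;> simp_all

theorem stmt_15_general {V : Type*} (G : SimpleGraph V) (B : Set V)
    (hB : IsBWLabelling G B)
    (hfree : ¬ LabelledIndSubgraph g2P1'P3 ({0, 1, 2, 4} : Set (Fin 5)) G B) :
    ∀ w ∉ B, ({b ∈ B | ¬ G.Adj w b}).ncard ≤ 1 ∨ ({b ∈ B | G.Adj w b}).ncard ≤ 1 := by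
  intro w hw
  by_contra! h
  obtain ⟨⟨b₀, ⟨hb₀, hwb₀⟩, b₁, ⟨hb₁, hwb₁⟩, hb₀₁⟩, -⟩ :=
    Set.one_lt_ncard_iff_nontrivial_and_finite.mp h.1
  obtain ⟨⟨b₂, ⟨hb₂, hwb₂⟩, b₄, ⟨hb₄, hwb₄⟩, hb₂₄⟩, -⟩ :=
    Set.one_lt_ncard_iff_nontrivial_and_finite.mp h.2
  exact hfree (labelledIndSubgraph_g2P1'P3 hB hw hb₀ hb₁ hb₂ hb₄ hwb₀ hwb₁ hwb₂ hwb₄ hb₀₁ hb₂₄)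

/-- Let `G` be a bipartite graph with bipartition `(B, Bᶜ)` such that `(2P_1+P_3)^b`
is not a labelled induced subgraph of `(B, Bᶜ, E_G)`. Then every white vertex `w`
is adjacent to all but at most one vertex of `B`, or is adjacent to at most one
vertex of `B`. -/
theorem stmt_15 {V : Type*} [Fintype V] (G : SimpleGraph V) (B : Set V)
    (hB : IsBWLabelling G B)
    (hfree : ¬ LabelledIndSubgraph g2P1'P3 ({0, 1, 2, 4} : Set (Fin 5)) G B) :
    ∀ w ∉ B, ({b ∈ B | ¬ G.Adj w b}).ncard ≤ 1 ∨ ({b ∈ B | G.Adj w b}).ncard ≤ 1 :=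
  stmt_15_general G B hB hfree
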